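/- Let n ≥ 1. The number D_{n²} of ordered pairs of disjoint S-permutation matrices of order n² equals (n!)^{2n} · Σ_{S ⊆ {1,…,n}×{1,…,n}} (−1)^{|S|} · ∏_{i=1}^{n} (n − r_i(S))! · ∏_{j=1}^{n} (n − c_j(S))!, where the sum ranges over all subsets S of {1,…,n}×{1,…,n}, r_i(S) = |{j : (i,j) ∈ S}| and c_j(S) = |{i : (i,j) ∈ S}|. -/
import Mathlib


/-- An `n²×n²` binary matrix, with rows indexed by `(block-row, offset)` and columns by
`(block-column, offset)`, is an S-permutation matrix if it is a permutation matrix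
(exactly one `1` in every row and every column) and every `n×n` block contains exactly one `1`. -/
def IsSPermMatrix (n : ℕ) (A : Matrix (Fin n × Fin n) (Fin n × Fin n) Bool) : Prop :=
  (∀ r, ∃! c, A r c = true) ∧
  (∀ c, ∃! r, A r c = true) ∧
  (∀ i j : Fin n, ∃! p : Fin n × Fin n, A (i, p.1) (j, p.2) = true)

/-- Two binary matrices are disjoint if there is no position where both have a `1`. -/
def MatDisjoint {α β : Type*} (A B : Matrix α β Bool) : Prop :=
  ∀ i j, ¬(A i j = true ∧ B i j = true)

/-- An `n²×n²` matrix with natural number entries is a Sudoku matrix if every row, every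
column and every `n×n` block contains each of the numbers `1,…,n²` exactly once. -/
def IsSudoku (n : ℕ) (P : Matrix (Fin n × Fin n) (Fin n × Fin n) ℕ) : Prop :=
  (∀ r, ∀ v ∈ Finset.Icc 1 (n * n), ∃! c, P r c = v) ∧
  (∀ c, ∀ v ∈ Finset.Icc 1 (n * n), ∃! r, P r c = v) ∧
  (∀ i j : Fin n, ∀ v ∈ Finset.Icc 1 (n * n), ∃! p : Fin n × Fin n, P (i, p.1) (j, p.2) = v)

/-- `π ∈ Π_n` iff in each row the first components form a permutation of `{1,…,n}` and in
each column the second components form a permutation of `{1,…,n}`. -/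
def IsPiMatrix (n : ℕ) (π : Matrix (Fin n) (Fin n) (Fin n × Fin n)) : Prop :=
  (∀ i, Function.Bijective fun j => (π i j).1) ∧
  (∀ j, Function.Bijective fun i => (π i j).2)

/-- Two elements of `Π_n` are disjoint if they differ in every entry. -/
def PiDisjoint {n : ℕ} (π π' : Matrix (Fin n) (Fin n) (Fin n × Fin n)) : Prop :=
  ∀ i j, π i j ≠ π' i j

/-- number of elements of `S` in row `i` -/
def rowCount {n : ℕ} (S : Finset (Fin n × Fin n)) (i : Fin n) : ℕ :=
  (S.filter fun p => p.1 = i).card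

/-- number of elements of `S` in column `j` -/
def colCount {n : ℕ} (S : Finset (Fin n × Fin n)) (j : Fin n) : ℕ :=
  (S.filter fun p => p.2 = j).card

open Finset Equiv

def toMat {n : ℕ} (π : Matrix (Fin n) (Fin n) (Fin n × Fin n)) :
    Matrix (Fin n × Fin n) (Fin n × Fin n) Bool :=
  fun r c => decide (π r.1 c.1 = (r.2, c.2))

lemma toMat_eq_true {n : ℕ} {π : Matrix (Fin n) (Fin n) (Fin n × Fin n)} {r c} :
    toMat π r c = true ↔ π r.1 c.1 = (r.2, c.2) := by simp [toMat]

lemma isSPerm_toMat {n : ℕ} {π : Matrix (Fin n) (Fin n) (Fin n × Fin n)}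
    (h : IsPiMatrix n π) : IsSPermMatrix n (toMat π) := by
  obtain ⟨h1, h2⟩ := h
  refine ⟨?_, ?_, ?_⟩
  · rintro ⟨i, p⟩
    obtain ⟨j, hj⟩ := (h1 i).surjective p
    refine ⟨(j, (π i j).2), ?_, ?_⟩
    · simp only [toMat_eq_true]
      exact Prod.ext hj rfl
    · rintro ⟨j', q'⟩ hc
      simp only [toMat_eq_true] at hc
      have hj' : (π i j').1 = p := by rw [hc]
      have : j' = j := (h1 i).injective (by simp only [hj'] ; exact hj.symm)
      subst this
      have : q' = (π i j').2 := by rw [hc]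
      simp [this]
  · rintro ⟨j, q⟩
    obtain ⟨i, hi⟩ := (h2 j).surjective q
    refine ⟨(i, (π i j).1), ?_, ?_⟩
    · simp only [toMat_eq_true]
      exact Prod.ext rfl hi
    · rintro ⟨i', p'⟩ hc
      simp only [toMat_eq_true] at hc
      have hi' : (π i' j).2 = q := by rw [hc]
      have : i' = i := (h2 j).injective (by simp only [hi'] ; exact hi.symm)
      subst this
      have : p' = (π i' j).1 := by rw [hc]
      simp [this]
  · intro i j
    refine ⟨π i j, by simp [toMat_eq_true], fun p hp => ?_⟩
    simp only [toMat_eq_true] at hp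
    exact hp.symm

lemma exists_pi {n : ℕ} {A : Matrix (Fin n × Fin n) (Fin n × Fin n) Bool}
    (h : IsSPermMatrix n A) : ∃ π, IsPiMatrix n π ∧ toMat π = A := by
  classical
  obtain ⟨hr, hc, hb⟩ := h
  set π : Matrix (Fin n) (Fin n) (Fin n × Fin n) := fun i j => (hb i j).choose with hπ
  have spec1 : ∀ i j, A (i, (π i j).1) (j, (π i j).2) = true := fun i j => (hb i j).choose_spec.1
  have spec2 : ∀ i j p, A (i, p.1) (j, p.2) = true → p = π i j := fun i j => (hb i j).choose_spec.2
  have key : ∀ i j p q, A (i, p) (j, q) = true ↔ π i j = (p, q) := by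
    intro i j p q
    constructor
    · intro hA; exact (spec2 i j (p, q) hA).symm
    · intro he; have := spec1 i j; rwa [he] at this
  refine ⟨π, ⟨?_, ?_⟩, ?_⟩
  · intro i
    rw [Fintype.bijective_iff_injective_and_card]
    refine ⟨?_, by simp⟩
    intro j j' he
    have e1 : A (i, (π i j).1) (j, (π i j).2) = true := spec1 i j
    have e2 : A (i, (π i j).1) (j', (π i j').2) = true := by
      have := spec1 i j'; simpa [← he] using this
    have := (hr (i, (π i j).1)).unique e1 e2
    exact (Prod.ext_iff.mp this).1
  · intro j
    rw [Fintype.bijective_iff_injective_and_card]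
    refine ⟨?_, by simp⟩
    intro i i' he
    have e1 : A (i, (π i j).1) (j, (π i j).2) = true := spec1 i j
    have e2 : A (i', (π i' j).1) (j, (π i j).2) = true := by
      have := spec1 i' j; simpa [he] using this
    have := (hc (j, (π i j).2)).unique e1 e2
    exact (Prod.ext_iff.mp this).1
  · funext r c
    have hk := key r.1 c.1 r.2 c.2
    rcases r with ⟨i, p⟩; rcases c with ⟨j, q⟩
    simp only [toMat]
    cases hA : A (i, p) (j, q)
    · simp only [Bool.false_eq_true, iff_false] at *
      rw [hA] at hk; simp only [Bool.false_eq_true, false_iff] at hk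
      simpa using hk
    · rw [hA] at hk; simp [hk.mp rfl]

lemma toMat_injective {n : ℕ} : Function.Injective (toMat (n := n)) := by
  intro π π' h
  funext i j
  have h1 : toMat π (i, (π i j).1) (j, (π i j).2) = true := by simp [toMat_eq_true]
  rw [h] at h1
  exact (toMat_eq_true.mp h1).symm

lemma matDisjoint_toMat_iff {n : ℕ} {π π' : Matrix (Fin n) (Fin n) (Fin n × Fin n)} :
    MatDisjoint (toMat π) (toMat π') ↔ PiDisjoint π π' := by
  constructor
  · intro h i j he
    exact h (i, (π i j).1) (j, (π i j).2) ⟨by simp [toMat_eq_true], by simp [toMat_eq_true, he]⟩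
  · rintro h r c ⟨h1, h2⟩
    exact h r.1 c.1 ((toMat_eq_true.mp h1).trans (toMat_eq_true.mp h2).symm)

noncomputable def permEquivSPerm (n : ℕ) :
    {π : Matrix (Fin n) (Fin n) (Fin n × Fin n) // IsPiMatrix n π} ≃
    {A : Matrix (Fin n × Fin n) (Fin n × Fin n) Bool // IsSPermMatrix n A} :=
  Equiv.ofBijective (fun x => ⟨toMat x.1, isSPerm_toMat x.2⟩)
    ⟨fun x y h => Subtype.ext (toMat_injective (congrArg Subtype.val h)),
     fun ⟨A, hA⟩ => by
       obtain ⟨π, h1, h2⟩ := exists_pi hA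
       exact ⟨⟨π, h1⟩, Subtype.ext h2⟩⟩

lemma card_fixing {n : ℕ} (T : Finset (Fin n)) :
    Nat.card {σ : Equiv.Perm (Fin n) // ∀ x ∈ T, σ x = x} = (n - T.card).factorial := by
  classical
  have e1 : {σ : Equiv.Perm (Fin n) // ∀ x ∈ T, σ x = x} ≃
      {σ : Equiv.Perm (Fin n) // ∀ x, ¬ (x ∉ T) → σ x = x} :=
    Equiv.subtypeEquivRight (fun σ => by simp)
  have e2 := Equiv.Perm.subtypeEquivSubtypePerm (fun x : Fin n => x ∉ T)
  rw [Nat.card_congr (e1.trans e2.symm), Nat.card_eq_fintype_card, Fintype.card_perm]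
  congr 1
  simp [Fintype.card_subtype_compl]

def mkPi {n : ℕ} (fg : (Fin n → Equiv.Perm (Fin n)) × (Fin n → Equiv.Perm (Fin n))) :
    Matrix (Fin n) (Fin n) (Fin n × Fin n) := fun i j => (fg.1 i j, fg.2 j i)

lemma isPi_mkPi {n : ℕ} (fg) : IsPiMatrix n (mkPi fg) :=
  ⟨fun i => (fg.1 i).bijective, fun j => (fg.2 j).bijective⟩

noncomputable def pairsEquivPi (n : ℕ) :
    ((Fin n → Equiv.Perm (Fin n)) × (Fin n → Equiv.Perm (Fin n))) ≃
    {π : Matrix (Fin n) (Fin n) (Fin n × Fin n) // IsPiMatrix n π} :=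
  Equiv.ofBijective (fun fg => ⟨mkPi fg, isPi_mkPi fg⟩) (by
    constructor
    · rintro ⟨f, g⟩ ⟨f', g'⟩ h
      have h' : mkPi (f, g) = mkPi (f', g') := congrArg Subtype.val h
      have hf : f = f' := by
        funext i; refine Equiv.ext fun j => ?_
        exact congrArg Prod.fst (congrFun (congrFun h' i) j)
      have hg : g = g' := by
        funext j; refine Equiv.ext fun i => ?_
        exact congrArg Prod.snd (congrFun (congrFun h' i) j)
      simp [hf, hg]
    · rintro ⟨π, h1, h2⟩
      refine ⟨(fun i => Equiv.ofBijective _ (h1 i), fun j => Equiv.ofBijective _ (h2 j)), ?_⟩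
      apply Subtype.ext
      funext i j
      show ((π i j).1, (π i j).2) = π i j
      exact Prod.mk.eta)

lemma pairsEquivPi_val {n : ℕ} (fg) : ((pairsEquivPi n) fg).1 = mkPi fg := rfl

def rowSet {n : ℕ} (S : Finset (Fin n × Fin n)) (i : Fin n) : Finset (Fin n) :=
  (S.filter fun p => p.1 = i).image Prod.snd

def colSet {n : ℕ} (S : Finset (Fin n × Fin n)) (j : Fin n) : Finset (Fin n) :=
  (S.filter fun p => p.2 = j).image Prod.fst

lemma rowSet_card {n : ℕ} (S : Finset (Fin n × Fin n)) (i : Fin n) :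
    (rowSet S i).card = rowCount S i := by
  apply Finset.card_image_of_injOn
  intro p hp q hq h
  simp only [coe_filter, Set.mem_setOf_eq] at hp hq
  exact Prod.ext (hp.2.trans hq.2.symm) h

lemma colSet_card {n : ℕ} (S : Finset (Fin n × Fin n)) (j : Fin n) :
    (colSet S j).card = colCount S j := by
  apply Finset.card_image_of_injOn
  intro p hp q hq h
  simp only [coe_filter, Set.mem_setOf_eq] at hp hq
  exact Prod.ext h (hp.2.trans hq.2.symm)

-- the main agreement-pair equivalence on quadruples
def quadEquiv {n : ℕ} (S : Finset (Fin n × Fin n)) :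
    {r : ((Fin n → Equiv.Perm (Fin n)) × (Fin n → Equiv.Perm (Fin n))) ×
         ((Fin n → Equiv.Perm (Fin n)) × (Fin n → Equiv.Perm (Fin n))) //
       ∀ p ∈ S, r.1.1 p.1 p.2 = r.2.1 p.1 p.2 ∧ r.1.2 p.2 p.1 = r.2.2 p.2 p.1} ≃
    ((Fin n → Equiv.Perm (Fin n)) × (Fin n → Equiv.Perm (Fin n))) ×
      ((∀ i, {σ : Equiv.Perm (Fin n) // ∀ j ∈ rowSet S i, σ j = j}) ×
       (∀ j, {σ : Equiv.Perm (Fin n) // ∀ i ∈ colSet S j, σ i = i})) where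
  toFun r := ⟨r.1.1,
    (fun i => ⟨(r.1.2.1 i).trans (r.1.1.1 i).symm, by
      intro j hj
      simp only [rowSet, mem_image, mem_filter] at hj
      obtain ⟨p, ⟨hpS, hp1⟩, hp2⟩ := hj
      have := (r.2 p hpS).1
      rw [hp1, hp2] at this
      simp [Equiv.trans_apply, ← this]⟩,
     fun j => ⟨(r.1.2.2 j).trans (r.1.1.2 j).symm, by
      intro i hi
      simp only [colSet, mem_image, mem_filter] at hi
      obtain ⟨p, ⟨hpS, hp2⟩, hp1⟩ := hi
      have := (r.2 p hpS).2
      rw [hp1, hp2] at this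
      simp [Equiv.trans_apply, ← this]⟩)⟩
  invFun r := ⟨⟨r.1, (fun i => (r.2.1 i).1.trans (r.1.1 i), fun j => (r.2.2 j).1.trans (r.1.2 j))⟩, by
    intro p hpS
    constructor
    · have hmem : p.2 ∈ rowSet S p.1 := by
        simp only [rowSet, mem_image, mem_filter]
        exact ⟨p, ⟨hpS, rfl⟩, rfl⟩
      have := (r.2.1 p.1).2 p.2 hmem
      simp [Equiv.trans_apply, this]
    · have hmem : p.1 ∈ colSet S p.2 := by
        simp only [colSet, mem_image, mem_filter]
        exact ⟨p, ⟨hpS, rfl⟩, rfl⟩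
      have := (r.2.2 p.2).2 p.1 hmem
      simp [Equiv.trans_apply, this]⟩
  left_inv r := by
    apply Subtype.ext
    refine Prod.ext rfl (Prod.ext ?_ ?_) <;> funext i <;> refine Equiv.ext fun x => ?_ <;>
      simp only [Equiv.trans_apply, Equiv.apply_symm_apply]
  right_inv r := by
    refine Prod.ext rfl (Prod.ext ?_ ?_) <;> funext i <;> refine Subtype.ext ?_ <;>
      refine Equiv.ext fun x => ?_ <;>
      simp only [Equiv.trans_apply, Equiv.symm_apply_apply]

lemma card_agree {n : ℕ} (S : Finset (Fin n × Fin n)) :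
    Nat.card {q : {π : Matrix (Fin n) (Fin n) (Fin n × Fin n) // IsPiMatrix n π} ×
                  {π : Matrix (Fin n) (Fin n) (Fin n × Fin n) // IsPiMatrix n π} //
               ∀ p ∈ S, q.1.1 p.1 p.2 = q.2.1 p.1 p.2} =
    n.factorial ^ (2 * n) *
      ((∏ i : Fin n, (n - rowCount S i).factorial) *
       (∏ j : Fin n, (n - colCount S j).factorial)) := by
  classical
  have eqv1 := Equiv.subtypeEquiv ((pairsEquivPi n).prodCongr (pairsEquivPi n))
    (p := fun r => ∀ p ∈ S, (mkPi r.1) p.1 p.2 = (mkPi r.2) p.1 p.2)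
    (q := fun q => ∀ p ∈ S, q.1.1 p.1 p.2 = q.2.1 p.1 p.2)
    (fun r => by rfl)
  have eqv2 : {r : _ × _ // ∀ p ∈ S, (mkPi r.1) p.1 p.2 = (mkPi r.2) p.1 p.2} ≃
      {r : ((Fin n → Equiv.Perm (Fin n)) × (Fin n → Equiv.Perm (Fin n))) ×
           ((Fin n → Equiv.Perm (Fin n)) × (Fin n → Equiv.Perm (Fin n))) //
         ∀ p ∈ S, r.1.1 p.1 p.2 = r.2.1 p.1 p.2 ∧ r.1.2 p.2 p.1 = r.2.2 p.2 p.1} :=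
    Equiv.subtypeEquivRight (fun r => by
      constructor
      · intro h p hp
        have := h p hp
        exact ⟨congrArg Prod.fst this, congrArg Prod.snd this⟩
      · intro h p hp
        exact Prod.ext (h p hp).1 (h p hp).2)
  rw [← Nat.card_congr eqv1, Nat.card_congr (eqv2.trans (quadEquiv S))]
  simp only [Nat.card_prod, Nat.card_pi]
  have hperm : Nat.card (Equiv.Perm (Fin n)) = n.factorial := by
    rw [Nat.card_eq_fintype_card, Fintype.card_perm, Fintype.card_fin]
  simp only [hperm, Finset.prod_const, Finset.card_univ, Fintype.card_fin]
  have : ∀ i : Fin n, Nat.card {σ : Equiv.Perm (Fin n) // ∀ j ∈ rowSet S i, σ j = j} =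
      (n - rowCount S i).factorial := fun i => by rw [card_fixing, rowSet_card]
  have h2 : ∀ j : Fin n, Nat.card {σ : Equiv.Perm (Fin n) // ∀ i ∈ colSet S j, σ i = i} =
      (n - colCount S j).factorial := fun j => by rw [card_fixing, colSet_card]
  simp only [this, h2]
  rw [two_mul, pow_add]
  try ring


set_option maxHeartbeats 1000000 in
theorem card_ordered_disjoint_sperm_pairs (n : ℕ) (hn : 1 ≤ n) :
    (Nat.card {p : {A : Matrix (Fin n × Fin n) (Fin n × Fin n) Bool // IsSPermMatrix n A} ×
                   {A : Matrix (Fin n × Fin n) (Fin n × Fin n) Bool // IsSPermMatrix n A} //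
                 MatDisjoint p.1.val p.2.val} : ℤ) =
      ((n.factorial) ^ (2 * n) : ℕ) *
        ∑ S : Finset (Fin n × Fin n), (-1 : ℤ) ^ S.card *
          ((∏ i : Fin n, (n - rowCount S i).factorial) *
           (∏ j : Fin n, (n - colCount S j).factorial) : ℕ) := by
  classical
  have step1 : Nat.card {p : {A : Matrix (Fin n × Fin n) (Fin n × Fin n) Bool // IsSPermMatrix n A} ×
                   {A : Matrix (Fin n × Fin n) (Fin n × Fin n) Bool // IsSPermMatrix n A} //
                 MatDisjoint p.1.val p.2.val}
      = Nat.card {q : {π : Matrix (Fin n) (Fin n) (Fin n × Fin n) // IsPiMatrix n π} ×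
                      {π : Matrix (Fin n) (Fin n) (Fin n × Fin n) // IsPiMatrix n π} //
                   PiDisjoint q.1.1 q.2.1} := by
    apply Nat.card_congr
    exact (Equiv.subtypeEquiv ((permEquivSPerm n).prodCongr (permEquivSPerm n))
      (fun q => matDisjoint_toMat_iff.symm)).symm
  rw [step1]
  have hcard : ∀ (P : ({π : Matrix (Fin n) (Fin n) (Fin n × Fin n) // IsPiMatrix n π} ×
        {π : Matrix (Fin n) (Fin n) (Fin n × Fin n) // IsPiMatrix n π}) → Prop),
      ∀ [DecidablePred P],
      (Nat.card {q // P q} : ℤ) = ∑ q, if P q then 1 else 0 := by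
    intro P _
    rw [Nat.card_eq_fintype_card, Fintype.card_subtype, Finset.card_filter]
    push_cast
    rfl
  have step2 : (Nat.card {q : {π : Matrix (Fin n) (Fin n) (Fin n × Fin n) // IsPiMatrix n π} ×
                      {π : Matrix (Fin n) (Fin n) (Fin n × Fin n) // IsPiMatrix n π} //
                   PiDisjoint q.1.1 q.2.1} : ℤ)
      = ∑ S : Finset (Fin n × Fin n), (-1 : ℤ) ^ S.card *
          (Nat.card {q : {π : Matrix (Fin n) (Fin n) (Fin n × Fin n) // IsPiMatrix n π} ×
                      {π : Matrix (Fin n) (Fin n) (Fin n × Fin n) // IsPiMatrix n π} //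
                   ∀ p ∈ S, q.1.1 p.1 p.2 = q.2.1 p.1 p.2} : ℤ) := by
    rw [hcard]
    simp only [hcard]
    simp only [Finset.mul_sum]
    rw [Finset.sum_comm]
    congr 1
    funext q
    set T : Finset (Fin n × Fin n) :=
      Finset.univ.filter (fun p => q.1.1 p.1 p.2 = q.2.1 p.1 p.2) with hT
    have hiff : ∀ S : Finset (Fin n × Fin n),
        (∀ p ∈ S, q.1.1 p.1 p.2 = q.2.1 p.1 p.2) ↔ S ⊆ T := by
      intro S
      constructor
      · intro h x hx
        rw [hT]; simp only [Finset.mem_filter, Finset.mem_univ, true_and]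
        exact h x hx
      · intro h x hx
        have := h hx
        rw [hT] at this
        simp only [Finset.mem_filter] at this
        exact this.2
    calc (if PiDisjoint q.1.1 q.2.1 then (1 : ℤ) else 0)
        = if T = ∅ then 1 else 0 := by
          apply if_congr _ rfl rfl
          rw [hT, Finset.filter_eq_empty_iff]
          constructor
          · intro h p _
            exact h p.1 p.2
          · intro h i j
            exact h (Finset.mem_univ (i, j))
      _ = ∑ S ∈ T.powerset, (-1 : ℤ) ^ S.card :=
          (Finset.sum_powerset_neg_one_pow_card).symm
      _ = ∑ S ∈ Finset.univ.filter (fun S => S ⊆ T), (-1 : ℤ) ^ S.card := by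
          congr 1
          ext S
          simp [Finset.mem_powerset]
      _ = ∑ S : Finset (Fin n × Fin n),
            if S ⊆ T then (-1 : ℤ) ^ S.card else 0 := Finset.sum_filter _ _
      _ = ∑ S : Finset (Fin n × Fin n),
            (-1 : ℤ) ^ S.card * (if ∀ p ∈ S, q.1.1 p.1 p.2 = q.2.1 p.1 p.2 then 1 else 0) :=
          Finset.sum_congr rfl fun S _ => by
            rw [mul_ite, mul_one, mul_zero]
            exact if_congr (hiff S).symm rfl rfl
  rw [step2]
  rw [Finset.mul_sum]
  apply Finset.sum_congr rfl
  intro S _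
  rw [card_agree S]
  push_cast
  ring
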